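/- arXiv:2305.15928 — 9 statements merged into one kernel-verified Lean document; each statement's English description precedes it below -/
import Mathlib

section
/- Let X be a regular topological space, (x_n) a sequence in X, I an ideal on ω, and η ∈ X with F_η closed. If (I,𝓕)-lim x_n = η, then every I-cluster point of (x_n) belongs to F_η, i.e., Γ_x(I) ⊆ F_η. -/
/-- An ideal on ω: closed under subsets and finite unions, contains all finite sets,
and does not contain ω itself. -/
def IsIdeal (I : Set (Set ℕ)) : Prop :=
  (∀ A B : Set ℕ, A ⊆ B → B ∈ I → A ∈ I) ∧
  (∀ A ∈ I, ∀ B ∈ I, A ∪ B ∈ I) ∧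
  (∀ A : Set ℕ, A.Finite → A ∈ I) ∧
  (Set.univ : Set ℕ) ∉ I

/-- `(I, F)`-convergence of the sequence `x` with roughness set `F`:
for every open `U ⊇ F`, the set `{n | x n ∉ U}` belongs to `I`. -/
def RoughLim {X : Type*} [TopologicalSpace X] (I : Set (Set ℕ)) (F : Set X)
    (x : ℕ → X) : Prop :=
  ∀ U : Set X, IsOpen U → F ⊆ U → {n | x n ∉ U} ∈ I

/-- `p` is an `I`-cluster point of `x`. -/
def IdealClusterPt {X : Type*} [TopologicalSpace X] (I : Set (Set ℕ)) (x : ℕ → X)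
    (p : X) : Prop :=
  ∀ U : Set X, IsOpen U → p ∈ U → {n | x n ∈ U} ∉ I

open Topology Filter in
theorem stmt5 {X : Type*} [TopologicalSpace X] [RegularSpace X]
    (I : Set (Set ℕ)) (hI : IsIdeal I) (F : X → Set X) (hF : ∀ η, η ∈ F η)
    (x : ℕ → X) (η : X) (hcl : IsClosed (F η)) (hlim : RoughLim I (F η) x) :
    {p | IdealClusterPt I x p} ⊆ F η := by
  intro p hp
  by_contra hpF
  have hdisj : Disjoint (𝓝 p) (𝓝ˢ (F η)) := by
    rw [disjoint_nhds_nhdsSet, hcl.closure_eq]; exact hpF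
  obtain ⟨U, hU, V, hV, hpU, hFV, hUV⟩ :
      ∃ U, IsOpen U ∧ ∃ V, IsOpen V ∧ p ∈ U ∧ F η ⊆ V ∧ Disjoint U V := by
    rcases Filter.disjoint_iff.1 hdisj with ⟨A, hA, B, hB, hAB⟩
    rcases mem_nhds_iff.1 hA with ⟨U, hUA, hU, hpU⟩
    rcases (hasBasis_nhdsSet _).mem_iff.1 hB with ⟨V, ⟨hV, hFV⟩, hVB⟩
    exact ⟨U, hU, V, hV, hpU, hFV, hAB.mono hUA hVB⟩
  have h1 : {n | x n ∉ V} ∈ I := hlim V hV hFV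
  have h2 : {n | x n ∈ U} ⊆ {n | x n ∉ V} := fun n hn hv =>
    hUV.le_bot ⟨hn, hv⟩
  exact hp U hU hpU (hI.1 _ _ h2 h1)
end

section
/- Let X be a regular topological space, (x_n) a sequence in X with {n : x_n ∉ K} ∈ I for some compact K ⊆ X, I an ideal on ω, 𝓕 a rough family, and η ∈ X with F_η closed. Then (I,𝓕)-lim x_n = η if and only if Γ_x(I) ⊆ F_η. -/
private lemma finUnion_mem {I : Set (Set ℕ)} (hI : IsIdeal I) {ι : Type*} (t : Finset ι)
    (A : ι → Set ℕ) (h : ∀ i ∈ t, A i ∈ I) : (⋃ i ∈ t, A i) ∈ I := by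
  classical
  induction t using Finset.induction with
  | empty => simpa using hI.2.2.1 ∅ Set.finite_empty
  | @insert a s hn ih =>
    rw [Finset.set_biUnion_insert]
    exact hI.2.1 _ (h a (Finset.mem_insert_self a s)) _
      (ih fun i hi => h i (Finset.mem_insert_of_mem hi))

theorem stmt6 {X : Type*} [TopologicalSpace X] [RegularSpace X]
    (I : Set (Set ℕ)) (hI : IsIdeal I) (F : X → Set X) (hF : ∀ η, η ∈ F η)
    (x : ℕ → X) (K : Set X) (hK : IsCompact K) (hxK : {n | x n ∉ K} ∈ I)
    (η : X) (hcl : IsClosed (F η)) :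
    RoughLim I (F η) x ↔ {p | IdealClusterPt I x p} ⊆ F η := by
  constructor
  · intro hlim p hp
    by_contra hpF
    have hdisj : Disjoint (nhdsSet (F η)) (nhds p) := by
      rw [disjoint_nhdsSet_nhds]
      rwa [hcl.closure_eq]
    obtain ⟨U, ⟨hUo, hUF⟩, V, ⟨hpV, hVo⟩, hUV⟩ :=
      ((hasBasis_nhdsSet _).disjoint_iff (nhds_basis_opens p)).mp hdisj
    have h1 : {n | x n ∉ U} ∈ I := hlim U hUo hUF
    have h2 : {n | x n ∈ V} ⊆ {n | x n ∉ U} := by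
      intro n hn hnU
      exact Set.disjoint_left.mp hUV hnU hn
    exact hp V hVo hpV (hI.1 _ _ h2 h1)
  · intro hΓ U hUo hUF
    -- each point of K \ U is not a cluster point
    have hKU : IsCompact (K \ U) := hK.diff hUo
    have hV : ∀ p ∈ K \ U, ∃ V : Set X, IsOpen V ∧ p ∈ V ∧ {n | x n ∈ V} ∈ I := by
      intro p hp
      have hpF : p ∉ F η := fun h => hp.2 (hUF h)
      have : ¬ IdealClusterPt I x p := fun h => hpF (hΓ h)
      simp only [IdealClusterPt, not_forall] at this
      obtain ⟨V, hVo, hpV, hVI⟩ := this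
      exact ⟨V, hVo, hpV, not_not.mp hVI⟩
    choose! V hVo hpV hVI using hV
    obtain ⟨t, htK, hcov⟩ := hKU.elim_nhds_subcover V fun p hp => (hVo p hp).mem_nhds (hpV p hp)
    have hsub : {n | x n ∉ U} ⊆ {n | x n ∉ K} ∪ ⋃ p ∈ t, {n | x n ∈ V p} := by
      intro n hn
      by_cases hnK : x n ∈ K
      · right
        have : x n ∈ K \ U := ⟨hnK, hn⟩
        obtain ⟨p, hpt, hxp⟩ := Set.mem_iUnion₂.mp (hcov this)
        exact Set.mem_iUnion₂.mpr ⟨p, hpt, hxp⟩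
      · exact Or.inl hnK
    refine hI.1 _ _ hsub (hI.2.1 _ hxK _ ?_)
    exact finUnion_mem hI t _ fun p hp => hVI p (htK p hp)
end

section
/- Under the hypotheses of the previous characterization (X regular, {n : x_n ∉ K} ∈ I for some compact K, all F_η closed), the set of (I,𝓕)-limits equals {η ∈ X : Γ_x(I) ⊆ F_η}. -/
private lemma finset_union_mem {I : Set (Set ℕ)} (hI : IsIdeal I) {ι : Type*}
    (t : Finset ι) (f : ι → Set ℕ) (hf : ∀ i ∈ t, f i ∈ I) :
    (⋃ i ∈ t, f i) ∈ I := by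
  classical
  induction t using Finset.induction_on with
  | empty => simpa using hI.2.2.1 ∅ Set.finite_empty
  | @insert a s hx ih =>
    rw [Finset.set_biUnion_insert]
    exact hI.2.1 _ (hf a (Finset.mem_insert_self a s)) _
      (ih fun i hi => hf i (Finset.mem_insert_of_mem hi))

theorem stmt7 {X : Type*} [TopologicalSpace X] [RegularSpace X]
    (I : Set (Set ℕ)) (hI : IsIdeal I) (F : X → Set X) (hF : ∀ η, η ∈ F η)
    (x : ℕ → X) (K : Set X) (hK : IsCompact K) (hxK : {n | x n ∉ K} ∈ I)
    (hcl : ∀ η, IsClosed (F η)) :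
    {η | RoughLim I (F η) x} = {η | {p | IdealClusterPt I x p} ⊆ F η} := by
  ext η
  simp only [Set.mem_setOf_eq]
  constructor
  · intro h p hp
    by_contra hpF
    obtain ⟨U, V, hU, hV, hpU, hFV, hUV⟩ :=
      SeparatedNhds.of_isCompact_isClosed isCompact_singleton (hcl η)
        (Set.disjoint_singleton_left.mpr hpF)
    have hVI : {n | x n ∉ V} ∈ I := h V hV hFV
    have hsub : {n | x n ∈ U} ⊆ {n | x n ∉ V} := by
      intro n hn hnV
      exact Set.disjoint_left.mp hUV hn hnV
    exact hp U hU (hpU rfl) (hI.1 _ _ hsub hVI)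
  · intro h U hU hFU
    by_contra hA
    -- B = {n | x n ∈ K \ U} is not in I
    have hB : {n | x n ∈ K \ U} ∉ I := by
      intro hB
      apply hA
      refine hI.1 _ _ ?_ (hI.2.1 _ hxK _ hB)
      intro n hn
      by_cases hnK : x n ∈ K
      · exact Or.inr ⟨hnK, hn⟩
      · exact Or.inl hnK
    -- K \ U is compact
    have hKU : IsCompact (K \ U) := hK.diff hU
    have hno : ∀ p ∈ K \ U, ¬ IdealClusterPt I x p := by
      intro p hp hcp
      exact hp.2 (hFU (h hcp))
    -- choose for each p an open nbhd with {n | x n ∈ it} ∈ I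
    have hchoice : ∀ p : (K \ U : Set X), ∃ V : Set X, IsOpen V ∧ (p : X) ∈ V ∧
        {n | x n ∈ V} ∈ I := by
      intro p
      have := hno p p.2
      simp only [IdealClusterPt, not_forall] at this
      obtain ⟨V, hVo, hpV, hVI⟩ := this
      exact ⟨V, hVo, hpV, not_not.mp hVI⟩
    choose V hVo hpV hVI using hchoice
    obtain ⟨t, ht⟩ := hKU.elim_finite_subcover V hVo
      (fun p hp => Set.mem_iUnion.mpr ⟨⟨p, hp⟩, hpV _⟩)
    apply hB
    refine hI.1 _ _ ?_ (finset_union_mem hI t (fun i => {n | x n ∈ V i})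
      (fun i _ => hVI i))
    intro n hn
    obtain ⟨i, hi, hni⟩ := Set.mem_iUnion₂.mp (ht hn)
    exact Set.mem_iUnion₂.mpr ⟨i, hi, hni⟩
end

section
/- Let X = ℝ, I = Fin, F_η = (η − 1/2, η + 1/2) for all η, and let (x_n) be an enumeration of the rationals in [0,1]. Then L_x(I,𝓕) = {1/2}, while Γ_x(I) = [0,1] and there is no η with [0,1] ⊆ F_η. Hence the characterization L_x(I,𝓕) = {η : Γ_x(I) ⊆ F_η} fails when the F_η are not closed. -/
lemma key_inf (x : ℕ → ℝ) (hinj : Function.Injective x)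
    (hrange : Set.range x = {q : ℝ | q ∈ Set.Icc (0 : ℝ) 1 ∧ ∃ p : ℚ, (p : ℝ) = q})
    {c d : ℝ} (h0 : 0 ≤ c) (h1 : d ≤ 1) (hcd : c < d) :
    {n | x n ∈ Set.Ioo c d}.Infinite := by
  obtain ⟨p, hp1, hp2⟩ := exists_rat_btwn hcd
  obtain ⟨q, hq1, hq2⟩ := exists_rat_btwn hp2
  have hpq : p < q := by exact_mod_cast hq1
  have hT : (Set.Ioo p q : Set ℚ).Infinite := Set.infinite_coe_iff.mp (Set.Ioo.infinite hpq)
  have hTim : (((↑) : ℚ → ℝ) '' (Set.Ioo p q)).Infinite :=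
    hT.image Rat.cast_injective.injOn
  have hsub : (((↑) : ℚ → ℝ) '' (Set.Ioo p q)) ⊆ Set.range x := by
    rw [hrange]
    rintro _ ⟨r, ⟨hr1, hr2⟩, rfl⟩
    have hr1' : (p : ℝ) < (r : ℝ) := by exact_mod_cast hr1
    have hr2' : (r : ℝ) < (q : ℝ) := by exact_mod_cast hr2
    exact ⟨⟨le_of_lt (lt_of_le_of_lt h0 (lt_trans hp1 hr1')),
      le_of_lt (lt_of_lt_of_le (lt_trans hr2' hq2) h1)⟩, r, rfl⟩
  have hpre := hTim.preimage hsub (f := x)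
  refine hpre.mono ?_
  rintro n hn
  obtain ⟨r, ⟨hr1, hr2⟩, heq⟩ := hn
  have hr1' : (p : ℝ) < (r : ℝ) := by exact_mod_cast hr1
  have hr2' : (r : ℝ) < (q : ℝ) := by exact_mod_cast hr2
  exact ⟨by rw [← heq]; exact lt_trans hp1 hr1', by rw [← heq]; exact lt_trans hr2' hq2⟩

theorem stmt8 (F : ℝ → Set ℝ) (hF : ∀ η, F η = Set.Ioo (η - 1/2) (η + 1/2))
    (x : ℕ → ℝ) (hinj : Function.Injective x)
    (hrange : Set.range x = {q : ℝ | q ∈ Set.Icc (0 : ℝ) 1 ∧ ∃ p : ℚ, (p : ℝ) = q}) :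
    {η | RoughLim {A : Set ℕ | A.Finite} (F η) x} = {1/2} ∧
    {p : ℝ | IdealClusterPt {A : Set ℕ | A.Finite} x p} = Set.Icc 0 1 ∧
    ¬ ∃ η : ℝ, Set.Icc (0 : ℝ) 1 ⊆ F η := by
  have hxmem : ∀ n, x n ∈ Set.Icc (0 : ℝ) 1 := by
    intro n
    have : x n ∈ Set.range x := Set.mem_range_self n
    rw [hrange] at this
    exact this.1
  refine ⟨?_, ?_, ?_⟩
  · -- rough limits = {1/2}
    ext η
    simp only [Set.mem_setOf_eq, Set.mem_singleton_iff]
    constructor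
    · intro h
      by_contra hne
      rcases lt_or_gt_of_ne hne with hlt | hgt
      · -- η < 1/2 : rationals near 1 are outside F η
        have hU := h (F η) (by rw [hF]; exact isOpen_Ioo) subset_rfl
        have hinf : {n | x n ∈ Set.Ioo (max (η + 1/2) 0) 1}.Infinite :=
          key_inf x hinj hrange (le_max_right _ _) le_rfl
            (max_lt (by linarith) (by norm_num))
        refine hinf ?_
        refine Set.Finite.subset hU ?_
        intro n hn
        simp only [Set.mem_setOf_eq, hF] at *
        intro hc
        exact absurd hn.1 (not_lt.2 (le_max_of_le_left (le_of_lt hc.2)))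
      · -- η > 1/2 : rationals near 0 are outside F η
        have hU := h (F η) (by rw [hF]; exact isOpen_Ioo) subset_rfl
        have hinf : {n | x n ∈ Set.Ioo 0 (min (η - 1/2) 1)}.Infinite :=
          key_inf x hinj hrange le_rfl (min_le_right _ _)
            (lt_min (by linarith) (by norm_num))
        refine hinf ?_
        refine Set.Finite.subset hU ?_
        intro n hn
        simp only [Set.mem_setOf_eq, hF] at *
        intro hc
        exact absurd hn.2 (not_lt.2 (le_trans (min_le_left _ _) (le_of_lt hc.1)))
    · rintro rfl
      intro U hUo hUF
      have hFη : F (1/2 : ℝ) = Set.Ioo 0 1 := by rw [hF]; norm_num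
      rw [hFη] at hUF
      have : {n | x n ∉ U} ⊆ x ⁻¹' {0, 1} := by
        intro n hn
        rcases (hxmem n).1.lt_or_eq with h0 | h0
        · rcases (hxmem n).2.lt_or_eq with h1 | h1
          · exact absurd (hUF ⟨h0, h1⟩) hn
          · exact Or.inr h1
        · exact Or.inl h0.symm
      have hfin2 : (x ⁻¹' {0, 1}).Finite :=
        ((Set.finite_singleton (1:ℝ)).insert 0).preimage hinj.injOn
      exact hfin2.subset this
  · -- cluster points = [0,1]
    ext p
    simp only [Set.mem_setOf_eq]
    constructor
    · intro h
      by_contra hp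
      have hopen : IsOpen ((Set.Icc (0:ℝ) 1)ᶜ) := isClosed_Icc.isOpen_compl
      have := h _ hopen hp
      refine this ?_
      refine Set.Finite.subset (Set.finite_empty) ?_
      intro n hn
      exact absurd (hxmem n) hn
    · intro hp U hUo hpU hfin
      obtain ⟨ε, hε, hball⟩ := Metric.isOpen_iff.1 hUo p hpU
      set c := max (p - ε) 0 with hc
      set d := min (p + ε) 1 with hd
      have hcd : c < d := by
        rcases lt_or_eq_of_le hp.2 with h1 | h1
        · exact lt_of_le_of_lt (max_le (by linarith) hp.1) (lt_min (by linarith) (by linarith))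
        · have : c < 1 := max_lt (by linarith) (by norm_num)
          calc c < 1 := this
            _ ≤ d := le_min (by linarith) le_rfl
      have hinf := key_inf x hinj hrange (le_max_right _ _) (min_le_right _ _) hcd
      refine hinf (Set.Finite.subset hfin ?_)
      intro n hn
      obtain ⟨h1, h2⟩ := hn
      have : x n ∈ Metric.ball p ε := by
        rw [Real.ball_eq_Ioo]
        exact ⟨lt_of_le_of_lt (le_max_left _ _) h1, lt_of_lt_of_le h2 (min_le_left _ _)⟩
      exact hball this
  · rintro ⟨η, hη⟩
    rw [hF] at hη
    have h0 := hη (Set.left_mem_Icc.2 (by norm_num))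
    have h1 := hη (Set.right_mem_Icc.2 (by norm_num))
    obtain ⟨ha, _⟩ := h0
    obtain ⟨_, hb⟩ := h1
    linarith
end

section
/- Let X be a normed vector space, I a nonmaximal ideal on ω, and 𝓕 a rough family whose sets F_η are uniformly bounded (there is r > 0 with diam(F_η) ≤ r for all η). Then the set of (I,𝓕)-convergent sequences is a vector subspace of X^ω if and only if F_η = {η} for all η ∈ X. -/
theorem stmt9 {X : Type*} [NormedAddCommGroup X] [NormedSpace ℝ X]
    (I : Set (Set ℕ)) (hI : IsIdeal I)
    (hnonmax : ∃ S : Set ℕ, S ∉ I ∧ Sᶜ ∉ I)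
    (F : X → Set X) (hF : ∀ η, η ∈ F η)
    (hbd : ∃ r > (0 : ℝ), ∀ η, ∀ a ∈ F η, ∀ b ∈ F η, dist a b ≤ r) :
    (∃ S : Submodule ℝ (ℕ → X), (S : Set (ℕ → X)) = {x | ∃ η, RoughLim I (F η) x}) ↔
      ∀ η : X, F η = {η} := by
  classical
  obtain ⟨hdown, hunion, hfin, huniv⟩ := hI
  obtain ⟨r, hr0, hrd⟩ := hbd
  constructor
  · rintro ⟨S, hS⟩ η
    refine Set.eq_singleton_iff_unique_mem.mpr ⟨hF η, ?_⟩
    intro ζ hζ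
    by_contra hne
    obtain ⟨A, hA, hAc⟩ := hnonmax
    set v : X := ζ - η with hvdef
    have hvne : v ≠ 0 := sub_ne_zero.mpr hne
    have hvpos : 0 < ‖v‖ := norm_pos_iff.mpr hvne
    set z : ℕ → X := fun n => if n ∈ A then ζ else η with hzdef
    have hz : z ∈ S := by
      rw [← SetLike.mem_coe, hS]
      refine ⟨η, fun U hU hFU => ?_⟩
      have hempty : {n | z n ∉ U} = ∅ := by
        ext n
        simp only [Set.mem_setOf_eq, Set.mem_empty_iff_false, iff_false, not_not, hzdef]
        split
        · exact hFU hζ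
        · exact hFU (hF η)
      rw [hempty]; exact hfin ∅ Set.finite_empty
    have hy : (fun _ : ℕ => η) ∈ S := by
      rw [← SetLike.mem_coe, hS]
      refine ⟨η, fun U hU hFU => ?_⟩
      have hempty : {n | (fun _ : ℕ => η) n ∉ U} = ∅ := by
        ext n
        simp only [Set.mem_setOf_eq, Set.mem_empty_iff_false, iff_false, not_not]
        exact hFU (hF η)
      rw [hempty]; exact hfin ∅ Set.finite_empty
    set c : ℝ := (r + 2) / ‖v‖ with hcdef
    have hcpos : 0 < c := div_pos (by linarith) hvpos
    have hcx : c • (z - fun _ : ℕ => η) ∈ S := S.smul_mem c (sub_mem hz hy)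
    obtain ⟨μ, hμ⟩ : ∃ μ, RoughLim I (F μ) (c • (z - fun _ : ℕ => η)) := by
      rw [← SetLike.mem_coe, hS] at hcx; exact hcx
    set w : ℕ → X := c • (z - fun _ : ℕ => η) with hwdef
    have hwval : ∀ n, w n = if n ∈ A then c • v else 0 := by
      intro n
      simp only [hwdef, hzdef, Pi.smul_apply, Pi.sub_apply]
      split
      · rfl
      · simp
    -- For any value taken on a non-ideal set, it is ε-close to F μ.
    have key : ∀ (p : X) (ε : ℝ), 0 < ε → {n | w n = p} ∉ I → ∃ b ∈ F μ, dist p b < ε := by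
      intro p ε hε hp
      by_contra h
      push_neg at h
      have hpU : p ∉ Metric.thickening ε (F μ) := by
        rw [Metric.mem_thickening_iff]
        push_neg
        intro b hb
        exact h b hb
      have hUI : {n | w n ∉ Metric.thickening ε (F μ)} ∈ I :=
        hμ _ Metric.isOpen_thickening (Metric.self_subset_thickening hε (F μ))
      exact hp (hdown _ _ (fun n hn => by
        simp only [Set.mem_setOf_eq] at hn ⊢
        rw [hn]; exact hpU) hUI)
    have h0 : {n | w n = 0} ∉ I := by
      intro hmem
      exact hAc (hdown _ _ (fun n hn => by
        simp only [Set.mem_setOf_eq, hwval n, if_neg hn]) hmem)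
    have hcv : {n | w n = c • v} ∉ I := by
      intro hmem
      exact hA (hdown _ _ (fun n hn => by
        simp only [Set.mem_setOf_eq, hwval n, if_pos hn]) hmem)
    obtain ⟨a, ha, hda⟩ := key 0 1 one_pos h0
    obtain ⟨b, hb, hdb⟩ := key (c • v) 1 one_pos hcv
    have hab : dist a b ≤ r := hrd μ a ha b hb
    have hnorm : ‖c • v‖ = r + 2 := by
      rw [norm_smul, Real.norm_eq_abs, abs_of_pos hcpos, hcdef,
        div_mul_cancel₀ _ (ne_of_gt hvpos)]
    have : ‖c • v‖ ≤ dist (c • v) b + dist b a + dist a 0 := by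
      have := dist_triangle4 (c • v) b a 0
      simpa [dist_eq_norm] using this
    have hda' : dist a 0 < 1 := by rwa [dist_comm] at hda
    have hab' : dist b a ≤ r := by rwa [dist_comm] at hab
    linarith
  · intro hsing
    refine ⟨{ carrier := {x | ∃ η, RoughLim I (F η) x},
              add_mem' := ?_, zero_mem' := ?_, smul_mem' := ?_ }, rfl⟩
    · rintro x y ⟨η, hx⟩ ⟨μ, hy⟩
      refine ⟨η + μ, fun U hU hFU => ?_⟩
      have hmemU : η + μ ∈ U := hFU (hF (η + μ))
      obtain ⟨ε, hε, hball⟩ := Metric.isOpen_iff.mp hU _ hmemU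
      have hx2 : {n | x n ∉ Metric.ball η (ε / 2)} ∈ I := by
        refine hx _ Metric.isOpen_ball ?_
        rw [hsing η, Set.singleton_subset_iff]
        exact Metric.mem_ball_self (by linarith)
      have hy2 : {n | y n ∉ Metric.ball μ (ε / 2)} ∈ I := by
        refine hy _ Metric.isOpen_ball ?_
        rw [hsing μ, Set.singleton_subset_iff]
        exact Metric.mem_ball_self (by linarith)
      refine hdown _ _ ?_ (hunion _ hx2 _ hy2)
      intro n hn
      simp only [Set.mem_setOf_eq, Set.mem_union] at hn ⊢
      by_contra hcon
      push_neg at hcon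
      obtain ⟨h1, h2⟩ := hcon
      apply hn
      apply hball
      rw [Metric.mem_ball] at h1 h2 ⊢
      calc dist ((x + y) n) (η + μ) ≤ dist (x n) η + dist (y n) μ := dist_add_add_le _ _ _ _
        _ < ε / 2 + ε / 2 := add_lt_add h1 h2
        _ = ε := by ring
    · refine ⟨0, fun U hU hFU => ?_⟩
      have h0 : (0 : X) ∈ U := hFU (hF 0)
      have hempty : {n | (0 : ℕ → X) n ∉ U} = ∅ := by
        ext n; simp [h0]
      rw [hempty]; exact hfin ∅ Set.finite_empty
    · rintro c x ⟨η, hx⟩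
      refine ⟨c • η, fun U hU hFU => ?_⟩
      have hmemU : c • η ∈ U := hFU (hF (c • η))
      by_cases hc : c = 0
      · subst hc
        have hempty : {n | ((0 : ℝ) • x) n ∉ U} = ∅ := by
          ext n
          simp only [Set.mem_setOf_eq, Set.mem_empty_iff_false, iff_false, not_not,
            Pi.smul_apply, zero_smul]
          simpa using hmemU
        rw [hempty]; exact hfin ∅ Set.finite_empty
      · obtain ⟨ε, hε, hball⟩ := Metric.isOpen_iff.mp hU _ hmemU
        have habs : 0 < |c| := abs_pos.mpr hc
        have hx2 : {n | x n ∉ Metric.ball η (ε / |c|)} ∈ I := by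
          refine hx _ Metric.isOpen_ball ?_
          rw [hsing η, Set.singleton_subset_iff]
          exact Metric.mem_ball_self (div_pos hε habs)
        refine hdown _ _ ?_ hx2
        intro n hn
        simp only [Set.mem_setOf_eq] at hn ⊢
        intro hmem
        apply hn
        apply hball
        rw [Metric.mem_ball] at hmem ⊢
        have : dist ((c • x) n) (c • η) = |c| * dist (x n) η := by
          simp only [Pi.smul_apply, dist_smul₀, Real.norm_eq_abs]
        rw [this]
        calc |c| * dist (x n) η < |c| * (ε / |c|) := by
              exact mul_lt_mul_of_pos_left hmem habs
          _ = ε := by field_simp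
end

section
/- Let X be a topological space, I an ideal on ω, 𝓕 = {F_η} a rough family of closed sets, and suppose the map η ↦ F_η from X to the hyperspace of nonempty closed subsets of X (with the upper Vietoris topology) is continuous. Then the set L_x(I,𝓕) of (I,𝓕)-limits of any sequence (x_n) is closed in X. -/
/-- The upper Vietoris topology on the hyperspace of nonempty closed subsets. -/
def UpperVietoris (X : Type*) [TopologicalSpace X] :
    TopologicalSpace {F : Set X // F.Nonempty ∧ IsClosed F} :=
  TopologicalSpace.generateFrom
    {s | ∃ U : Set X, IsOpen U ∧ s = {F : {F : Set X // F.Nonempty ∧ IsClosed F} | (F : Set X) ⊆ U}}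

theorem stmt11 {X : Type*} [TopologicalSpace X] (I : Set (Set ℕ)) (hI : IsIdeal I)
    (F : X → Set X) (hF : ∀ η, η ∈ F η) (hcl : ∀ η, IsClosed (F η))
    (hcont : @Continuous X _ inferInstance (UpperVietoris X)
      (fun η => (⟨F η, ⟨η, hF η⟩, hcl η⟩ : {F : Set X // F.Nonempty ∧ IsClosed F})))
    (x : ℕ → X) :
    IsClosed {η | RoughLim I (F η) x} := by
  rw [← isOpen_compl_iff, isOpen_iff_forall_mem_open]
  intro η hη
  simp only [Set.mem_compl_iff, Set.mem_setOf_eq, RoughLim] at hη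
  push_neg at hη
  obtain ⟨U, hU, hFU, hnI⟩ := hη
  refine ⟨{η' | F η' ⊆ U}, fun η' hη' h => hnI (h U hU hη'), ?_, hFU⟩
  have hopen : @IsOpen _ (UpperVietoris X)
      {G : {F : Set X // F.Nonempty ∧ IsClosed F} | (G : Set X) ⊆ U} :=
    TopologicalSpace.GenerateOpen.basic _ ⟨U, hU, rfl⟩
  exact @Continuous.isOpen_preimage _ _ _ (UpperVietoris X) _ hcont _ hopen
end

section
/- Let X be a locally convex topological vector space, I an ideal on ω, (x_n) a sequence with {n : x_n ∉ K} ∈ I for some compact K ⊆ X, and 𝓕 a rough family with every F_η closed and convex. Then L_x(I,𝓕) = {η ∈ X : core_x(I) ⊆ F_η}, where core_x(I) = ⋂_{E ∈ I*} closed convex hull of {x_n : n ∈ E}. -/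
/-! Along the dual filter `I*`, `(I, F)`-convergence says exactly that `x` tends to the
neighbourhood filter `𝓝ˢ F`. If it does and `p ∉ F` lies in the core, Hahn–Banach separates `p`
from the closed convex set `F` by an open half-space; `x n` eventually lies in that half-space,
so the core lies in its closure, which misses `p`. Conversely, `x` eventually lies in the compact
set `K`, so it tends to `𝓝ˢ` of its set of cluster points along `I*`, and every such cluster
point lies in the core. -/

open Filter Topology Set

def IsIdeal.dualFilter {I : Set (Set ℕ)} (hI : IsIdeal I) : Filter ℕ :=
  comk (· ∈ I) (hI.2.2.1 ∅ finite_empty) (fun t ht s hst ↦ hI.1 s t hst ht) hI.2.1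

theorem roughLim_iff_tendsto {X : Type*} [TopologicalSpace X] {I : Set (Set ℕ)} (hI : IsIdeal I)
    {C : Set X} {x : ℕ → X} : RoughLim I C x ↔ Tendsto x hI.dualFilter (𝓝ˢ C) := by
  simp only [(hasBasis_nhdsSet C).tendsto_right_iff, and_imp, RoughLim]
  rfl

theorem mem_closure_image_of_mapClusterPt {ι X : Type*} [TopologicalSpace X] {l : Filter ι}
    {x : ι → X} {p : X} (hp : MapClusterPt p l x) {E : Set ι} (hE : E ∈ l) :
    p ∈ closure (x '' E) :=
  clusterPt_iff_forall_mem_closure.1 hp _ (image_mem_map hE)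

theorem tendsto_nhdsSet_of_biInter_closure_subset {ι X : Type*} [TopologicalSpace X]
    {l : Filter ι} {x : ι → X} {K C : Set X} (hK : IsCompact K) (hxK : ∀ᶠ n in l, x n ∈ K)
    (hC : ⋂ E ∈ l, closure (x '' E) ⊆ C) : Tendsto x l (𝓝ˢ C) :=
  hK.tendsto_nhdsSet_of_mapClusterPt hxK fun _ _ hp ↦
    hC (mem_iInter₂.2 fun _ ↦ mem_closure_image_of_mapClusterPt hp)

section LocallyConvex

variable {ι X : Type*} [AddCommGroup X] [Module ℝ X] [TopologicalSpace X]
  [IsTopologicalAddGroup X] [ContinuousSMul ℝ X] [LocallyConvexSpace ℝ X]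

theorem biInter_closure_convexHull_subset_of_tendsto {l : Filter ι} {x : ι → X} {C : Set X}
    (hCc : IsClosed C) (hCv : Convex ℝ C) (hx : Tendsto x l (𝓝ˢ C)) :
    ⋂ E ∈ l, closure (convexHull ℝ (x '' E)) ⊆ C := by
  intro p hp
  by_contra hpC
  obtain ⟨f, u, hfp, hfC⟩ := geometric_hahn_banach_point_closed hCv hCc hpC
  have hE : x ⁻¹' {z | u < f z} ∈ l :=
    hx ((isOpen_lt continuous_const f.continuous).mem_nhdsSet.2 hfC)
  have hhull : closure (convexHull ℝ (x '' (x ⁻¹' {z | u < f z}))) ⊆ {z | u ≤ f z} :=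
    closure_minimal
      (convexHull_min
        ((image_preimage_subset _ _).trans (ofPred_subset_ofPred.2 fun _ ↦ le_of_lt))
        (convex_halfSpace_ge f.isLinear u))
      (isClosed_le continuous_const f.continuous)
  exact hfp.not_ge (hhull (mem_iInter₂.1 hp _ hE))

theorem tendsto_nhdsSet_iff_biInter_closure_convexHull_subset {l : Filter ι} {x : ι → X}
    {K C : Set X} (hK : IsCompact K) (hxK : ∀ᶠ n in l, x n ∈ K) (hCc : IsClosed C)
    (hCv : Convex ℝ C) :
    Tendsto x l (𝓝ˢ C) ↔ ⋂ E ∈ l, closure (convexHull ℝ (x '' E)) ⊆ C :=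
  ⟨biInter_closure_convexHull_subset_of_tendsto hCc hCv, fun h ↦
    tendsto_nhdsSet_of_biInter_closure_subset hK hxK <|
      (biInter_mono subset_rfl fun _ _ ↦ closure_mono (subset_convexHull ℝ _)).trans h⟩

end LocallyConvex

theorem stmt15_general {X : Type*} [AddCommGroup X] [Module ℝ X] [TopologicalSpace X]
    [IsTopologicalAddGroup X] [ContinuousSMul ℝ X] [LocallyConvexSpace ℝ X]
    (I : Set (Set ℕ)) (hI : IsIdeal I) (x : ℕ → X)
    (K : Set X) (hK : IsCompact K) (hxK : {n | x n ∉ K} ∈ I)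
    (F : X → Set X)
    (hcl : ∀ η, IsClosed (F η)) (hconv : ∀ η, Convex ℝ (F η)) :
    {η | RoughLim I (F η) x} =
      {η | (⋂ E ∈ {S : Set ℕ | Sᶜ ∈ I}, closure (convexHull ℝ (x '' E))) ⊆ F η} := by
  ext η
  exact (roughLim_iff_tendsto hI).trans <|
    tendsto_nhdsSet_iff_biInter_closure_convexHull_subset (l := hI.dualFilter) hK hxK
      (hcl η) (hconv η)

theorem stmt15 {X : Type*} [AddCommGroup X] [Module ℝ X] [TopologicalSpace X]
    [IsTopologicalAddGroup X] [ContinuousSMul ℝ X] [LocallyConvexSpace ℝ X]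
    (I : Set (Set ℕ)) (hI : IsIdeal I) (x : ℕ → X)
    (K : Set X) (hK : IsCompact K) (hxK : {n | x n ∉ K} ∈ I)
    (F : X → Set X) (hF : ∀ η, η ∈ F η)
    (hcl : ∀ η, IsClosed (F η)) (hconv : ∀ η, Convex ℝ (F η)) :
    {η | RoughLim I (F η) x} =
      {η | (⋂ E ∈ {S : Set ℕ | Sᶜ ∈ I}, closure (convexHull ℝ (x '' E))) ⊆ F η} :=
  stmt15_general I hI x K hK hxK F hcl hconv
end

section
/- If a sequence (x_n) in a metric vector space is I-convergent to η and F_γ = B_r(γ) for fixed r ≥ 0, then L_x(I,𝓕) = B_r(η): every γ with d(γ,η) ≤ r is an (I,𝓕)-limit, and no γ with d(γ,η) > r is. -/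
/-!
If `d(γ, η) ≤ r` then `η ∈ B_r(γ)`, so every open `U ⊇ B_r(γ)` is a neighbourhood of `η`
and `I`-convergence gives `{n | x n ∉ U} ∈ I`. If `d(γ, η) > r`, pick `r < s < d(γ, η)`:
the open balls `B(γ, s) ⊇ B_r(γ)` and `B(η, d(γ, η) - s) ∋ η` are disjoint, so the two
exceptional sets, both in `I`, cover `ω`, contradicting `ω ∉ I`.
-/

theorem IsIdeal.setOf_notMem_notMem_of_disjoint {X : Type*} {I : Set (Set ℕ)}
    (hI : IsIdeal I) {x : ℕ → X} {U V : Set X} (hUV : Disjoint U V)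
    (hU : {n | x n ∉ U} ∈ I) : {n | x n ∉ V} ∉ I := by
  intro hV
  have hcover : Set.univ ⊆ {n | x n ∉ U} ∪ {n | x n ∉ V} := fun n _ => by
    by_contra! h
    simp only [Set.mem_union, Set.mem_ofPred_eq, not_or, not_not] at h
    exact hUV.notMem_of_mem_left h.1 h.2
  exact hI.2.2.2 (hI.1 _ _ hcover (hI.2.1 _ hU _ hV))

theorem roughLim_of_mem {X : Type*} [TopologicalSpace X] {I : Set (Set ℕ)} {x : ℕ → X}
    {η : X} (hconv : ∀ U : Set X, IsOpen U → η ∈ U → {n | x n ∉ U} ∈ I) {F : Set X}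
    (hη : η ∈ F) : RoughLim I F x :=
  fun U hU hFU => hconv U hU (hFU hη)

theorem dist_le_of_roughLim_closedBall {X : Type*} [PseudoMetricSpace X]
    {I : Set (Set ℕ)} (hI : IsIdeal I) {x : ℕ → X} {η : X}
    (hconv : ∀ U : Set X, IsOpen U → η ∈ U → {n | x n ∉ U} ∈ I) {γ : X} {r : ℝ}
    (hγ : RoughLim I (Metric.closedBall γ r) x) : dist γ η ≤ r := by
  by_contra! hfar
  obtain ⟨s, hrs, hsd⟩ := exists_between hfar
  have hnear : {n | x n ∉ Metric.ball γ s} ∈ I :=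
    hγ _ Metric.isOpen_ball (Metric.closedBall_subset_ball hrs)
  have hdisj : Disjoint (Metric.ball γ s) (Metric.ball η (dist γ η - s)) :=
    Metric.ball_disjoint_ball (by linarith)
  exact hI.setOf_notMem_notMem_of_disjoint hdisj hnear
    (hconv _ Metric.isOpen_ball (Metric.mem_ball_self (by linarith)))

theorem stmt18_general {X : Type*} [MetricSpace X]
    (I : Set (Set ℕ)) (hI : IsIdeal I) (x : ℕ → X) (η : X)
    (hconv : ∀ U : Set X, IsOpen U → η ∈ U → {n | x n ∉ U} ∈ I)
    (r : ℝ) :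
    {γ | RoughLim I (Metric.closedBall γ r) x} = Metric.closedBall η r := by
  ext γ
  exact ⟨fun hγ => dist_le_of_roughLim_closedBall hI hconv hγ,
    fun hγ => roughLim_of_mem hconv (Metric.mem_closedBall_comm.mp hγ)⟩

theorem stmt18 {X : Type*} [AddCommGroup X] [Module ℝ X] [MetricSpace X]
    [IsTopologicalAddGroup X] [ContinuousSMul ℝ X]
    (I : Set (Set ℕ)) (hI : IsIdeal I) (x : ℕ → X) (η : X)
    (hconv : ∀ U : Set X, IsOpen U → η ∈ U → {n | x n ∉ U} ∈ I)
    (r : ℝ) (hr : 0 ≤ r) :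
    {γ | RoughLim I (Metric.closedBall γ r) x} = Metric.closedBall η r :=
  stmt18_general I hI x η hconv r
end

section
/- Let X = ℝ with the Euclidean topology, I = Fin, F_η = (η−3, η+3) for all η ∈ ℝ, and x_n = (−1)^n. Then L_x(I,𝓕) = (−2, 2); in particular, the set of (I,𝓕)-limits need not be closed when the sets F_η are open. -/
theorem stmt19 (F : ℝ → Set ℝ) (hF : ∀ η, F η = Set.Ioo (η - 3) (η + 3))
    (x : ℕ → ℝ) (hx : ∀ n, x n = (-1 : ℝ) ^ n) :
    {η | RoughLim {A : Set ℕ | A.Finite} (F η) x} = Set.Ioo (-2 : ℝ) 2 ∧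
    ¬ IsClosed {η | RoughLim {A : Set ℕ | A.Finite} (F η) x} := by
  have key : {η | RoughLim {A : Set ℕ | A.Finite} (F η) x} = Set.Ioo (-2 : ℝ) 2 := by
    ext η
    simp only [Set.mem_setOf_eq, Set.mem_Ioo]
    constructor
    · intro h
      by_contra hc
      push_neg at hc
      have hfin := h (F η) (by rw [hF]; exact isOpen_Ioo) (subset_refl _)
      simp only [Set.mem_setOf_eq] at hfin
      rcases le_or_gt η (-2) with h1 | h1
      · have hinf : {n | x n ∉ F η}.Infinite := by
          apply Set.infinite_of_injective_forall_mem (f := fun n => 2 * n)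
          · intro a b hab; simpa using hab
          · intro n
            simp only [Set.mem_setOf_eq, hx, hF, Set.mem_Ioo, pow_mul]
            norm_num
            intro _; linarith
        exact hinf hfin
      · have h2 : 2 ≤ η := hc h1
        have hinf : {n | x n ∉ F η}.Infinite := by
          apply Set.infinite_of_injective_forall_mem (f := fun n => 2 * n + 1)
          · intro a b hab; simpa using hab
          · intro n
            simp only [Set.mem_setOf_eq, hx, hF, Set.mem_Ioo, pow_succ, pow_mul]
            norm_num
            intro h'; linarith
        exact hinf hfin
    · rintro ⟨h1, h2⟩ U hU hsub
      have : {n | x n ∉ U} = ∅ := by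
        ext n
        simp only [Set.mem_setOf_eq, Set.mem_empty_iff_false, iff_false, not_not]
        apply hsub
        rw [hF, Set.mem_Ioo, hx]
        rcases Nat.even_or_odd n with he | ho
        · rw [he.neg_one_pow]; constructor <;> linarith
        · rw [ho.neg_one_pow]; constructor <;> linarith
      rw [this]
      exact Set.finite_empty
  refine ⟨key, ?_⟩
  rw [key]
  intro hcl
  have h := hcl.closure_eq
  rw [closure_Ioo (by norm_num : (-2 : ℝ) ≠ 2)] at h
  have h2 : (2 : ℝ) ∈ Set.Ioo (-2 : ℝ) 2 := by
    rw [← h]; exact Set.right_mem_Icc.mpr (by norm_num)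
  simp at h2
end
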